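/- Let N be a natural number with N ≥ 2, and let γ be a real number with 2N/(N+1) < γ ≤ 2. Then there exists a real number p > N/2 such that, setting θ := [((p−1+γ)/γ)·(1 − 1/(p+1))] / [1/N − 1/γ + (p−1+γ)/γ], one has 0 < θ < 1 and θ·(p+1)/(p−1+γ) < 1. -/

import Mathlib

/-!
Writing `E = γ/N + p - 2 + γ`, the interpolation parameter simplifies to
`θ = p (p-1+γ) / ((p+1) E)`. Then `θ (p+1)/(p-1+γ) = p / E`, which is `< 1` exactly when
`2 < γ/N + γ`, i.e. when `2N/(N+1) < γ`, whatever `p > 0`; and `(p+1) E - p (p-1+γ) = (p+1) γ/N + γ - 2`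
is positive under the same condition, so `θ < 1`. Hence any `p > N/2` (e.g. `p = N`) will do.
-/

open Set

/-- The Gagliardo–Nirenberg interpolation parameter `θ` of Lemma 3.4, in dimension `n`. -/
noncomputable def interpolationExponent (n γ p : ℝ) : ℝ :=
  ((p - 1 + γ) / γ * (1 - 1 / (p + 1))) / (1 / n - 1 / γ + (p - 1 + γ) / γ)

lemma two_lt_div_add_self_of_two_mul_div_lt {n γ : ℝ} (hn : 0 < n) (hγ : 2 * n / (n + 1) < γ) :
    2 < γ / n + γ := by
  rw [div_lt_iff₀ (by linarith)] at hγ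
  have : γ / n + γ = γ * (n + 1) / n := by field_simp; ring
  rwa [this, lt_div_iff₀ hn]

section

variable {n γ p : ℝ}

lemma interpolationExponent_eq (hγ : γ ≠ 0) (hp : p + 1 ≠ 0) :
    interpolationExponent n γ p = p * (p - 1 + γ) / ((p + 1) * (γ / n + p - 2 + γ)) := by
  unfold interpolationExponent
  rw [one_sub_div hp, add_sub_cancel_right]
  field_simp
  ring

variable (hn : 0 < n) (hγ : 2 * n / (n + 1) < γ) (hp : 0 < p) (hpγ : 0 < p - 1 + γ)
include hn hγ hp hpγ

lemma interpolationExponent_mem_Ioo : interpolationExponent n γ p ∈ Ioo 0 1 := by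
  have hγn := two_lt_div_add_self_of_two_mul_div_lt hn hγ
  have hγ0 : 0 < γ := lt_trans (by positivity) hγ
  have hE : 0 < γ / n + p - 2 + γ := by linarith
  rw [interpolationExponent_eq hγ0.ne' (by positivity)]
  refine ⟨by positivity, (div_lt_one (by positivity)).2 ?_⟩
  have : 0 < p * (γ / n) := by positivity
  nlinarith

lemma interpolationExponent_mul_div_lt_one :
    interpolationExponent n γ p * (p + 1) / (p - 1 + γ) < 1 := by
  have hγn := two_lt_div_add_self_of_two_mul_div_lt hn hγ
  have hγ0 : 0 < γ := lt_trans (by positivity) hγ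
  have hE : p < γ / n + p - 2 + γ := by linarith
  calc interpolationExponent n γ p * (p + 1) / (p - 1 + γ) = p / (γ / n + p - 2 + γ) := by
        rw [interpolationExponent_eq hγ0.ne' (by positivity)]
        field_simp
    _ < 1 := (div_lt_one (by linarith)).2 hE

end

theorem exponent_choice_lemma_3_4_general (N : ℕ) (hN : 2 ≤ N) (γ : ℝ)
    (hγ1 : 2 * (N : ℝ) / ((N : ℝ) + 1) < γ) :
    ∃ p θ : ℝ, (N : ℝ) / 2 < p ∧
      θ = ((p - 1 + γ) / γ * (1 - 1 / (p + 1))) /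
            (1 / (N : ℝ) - 1 / γ + (p - 1 + γ) / γ) ∧
      0 < θ ∧ θ < 1 ∧ θ * (p + 1) / (p - 1 + γ) < 1 := by
  have hN' : (2 : ℝ) ≤ N := by exact_mod_cast hN
  have hγ0 : 0 < γ := lt_trans (by positivity) hγ1
  have hn : (0 : ℝ) < N := by linarith
  have hp : (0 : ℝ) < N - 1 + γ := by linarith
  obtain ⟨hθ0, hθ1⟩ := interpolationExponent_mem_Ioo hn hγ1 hn hp
  exact ⟨N, interpolationExponent N γ N, by linarith, rfl, hθ0, hθ1,
    interpolationExponent_mul_div_lt_one hn hγ1 hn hp⟩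

/-- Exponent choice (15) of Lemma 3.4: for `N ≥ 2` and `2N/(N+1) < γ ≤ 2` there exists
`p > N/2` such that the interpolation parameter
`θ = ((p-1+γ)/γ · (1 - 1/(p+1))) / (1/N - 1/γ + (p-1+γ)/γ)` satisfies
`θ ∈ (0,1)` and `θ(p+1)/(p-1+γ) < 1`. -/
theorem exponent_choice_lemma_3_4 (N : ℕ) (hN : 2 ≤ N) (γ : ℝ)
    (hγ1 : 2 * (N : ℝ) / ((N : ℝ) + 1) < γ) (hγ2 : γ ≤ 2) :
    ∃ p θ : ℝ, (N : ℝ) / 2 < p ∧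
      θ = ((p - 1 + γ) / γ * (1 - 1 / (p + 1))) /
            (1 / (N : ℝ) - 1 / γ + (p - 1 + γ) / γ) ∧
      0 < θ ∧ θ < 1 ∧ θ * (p + 1) / (p - 1 + γ) < 1 :=
  exponent_choice_lemma_3_4_general N hN γ hγ1
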